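/- arXiv:1809.10407 — 2 statements merged into one kernel-verified Lean document; each statement's English description precedes it below -/
import Mathlib

section
/- Let m be a square-free positive integer with m ≡ 2 or 3 (mod 4), let θ = m^(1/4) be the real positive fourth root of m, and let K = ℚ(i, θ). Then K has degree 8 over ℚ; equivalently, the polynomial x⁴ − m is irreducible over ℚ(i). -/
open NumberField

/-- The real positive fourth root of `m`, viewed as a complex number. -/
noncomputable def theta (m : ℕ) : ℂ := ((m : ℝ) ^ ((1 : ℝ) / 4) : ℝ)

/-- The octic field `K = ℚ(i, m^(1/4))` as a subfield of `ℂ`. -/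
noncomputable def Kfield (m : ℕ) : IntermediateField ℚ ℂ :=
  IntermediateField.adjoin ℚ {Complex.I, theta m}

/-!
Since `m ≠ 1` is squarefree, `X⁴ - m` is Eisenstein at any prime dividing `m`, so `ℚ(θ)` has
degree 4. As `θ` is real, `ℚ(θ) ⊆ ℝ` contains no square root of `-1`, so adjoining `i` doubles
the degree.
-/

open Polynomial IntermediateField

theorem Polynomial.isEisensteinAt_X_pow_sub_C {R : Type*} [CommRing R] [Nontrivial R]
    {P : Ideal R} (hP : P ≠ ⊤) {n : ℕ} (hn : n ≠ 0) {a : R} (ha : a ∈ P) (ha2 : a ∉ P ^ 2) :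
    (X ^ n - C a).IsEisensteinAt P := by
  refine (monic_X_pow_sub_C a hn).isEisensteinAt_of_mem_of_notMem hP (fun {k} hk => ?_) ?_
  · rw [natDegree_X_pow_sub_C] at hk
    rw [coeff_sub, coeff_X_pow, if_neg hk.ne, coeff_C]
    split_ifs <;> simp [ha]
  · simpa [coeff_C, Ne.symm hn] using ha2

theorem Polynomial.irreducible_X_pow_sub_C_of_squarefree {n : ℕ} (hn : n ≠ 0) {a : ℤ}
    (ha : Squarefree a) (ha1 : ¬IsUnit a) : Irreducible (X ^ n - C (a : ℚ)) := by
  obtain ⟨p, hp, hpa⟩ := Int.exists_prime_and_dvd (mt Int.isUnit_iff_natAbs_eq.mpr ha1)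
  have hpa2 : a ∉ Ideal.span {p} ^ 2 := by
    rw [Ideal.span_singleton_pow, Ideal.mem_span_singleton, sq]
    exact fun h => hp.not_isUnit (ha p h)
  have hEis := isEisensteinAt_X_pow_sub_C (Ideal.span_singleton_eq_top.not.mpr hp.not_isUnit)
    hn (Ideal.mem_span_singleton.mpr hpa) hpa2
  have hmonic := monic_X_pow_sub_C a hn
  have hZ := hEis.irreducible ((Ideal.span_singleton_prime hp.ne_zero).mpr hp)
    hmonic.isPrimitive (by rw [natDegree_X_pow_sub_C]; omega)
  simpa using (IsPrimitive.Int.irreducible_iff_irreducible_map_cast hmonic.isPrimitive).mp hZ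

theorem theta_pow_four (m : ℕ) : theta m ^ 4 = m := by
  rw [theta]
  norm_cast
  rw [← Real.rpow_natCast, ← Real.rpow_mul (by positivity)]
  norm_num

theorem finrank_adjoin_theta {m : ℕ} (hm : Squarefree m) (hm1 : m ≠ 1) :
    Module.finrank ℚ ℚ⟮theta m⟯ = 4 := by
  have hirr : Irreducible (X ^ 4 - C (m : ℚ)) := by
    exact_mod_cast irreducible_X_pow_sub_C_of_squarefree (by norm_num)
      (Int.squarefree_natCast.mpr hm) (by rw [Int.isUnit_iff]; omega)
  have hmonic := monic_X_pow_sub_C (m : ℚ) (n := 4) (by norm_num)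
  have hroot : aeval (theta m) (X ^ 4 - C (m : ℚ)) = 0 := by simp [theta_pow_four]
  rw [adjoin.finrank ⟨_, hmonic, hroot⟩, ← minpoly.eq_of_irreducible_of_monic hirr hroot hmonic,
    natDegree_X_pow_sub_C]

theorem finrank_adjoin_I_of_forall_im_eq_zero {k : Type*} [Field k] [Algebra k ℂ]
    (F : IntermediateField k ℂ) (hF : ∀ x ∈ F, x.im = 0) :
    Module.finrank F F⟮Complex.I⟯ = 2 := by
  have hsq (b : F) : b ^ 2 ≠ -1 := fun hb => by
    have h : (b : ℂ) ^ 2 = -1 := by exact_mod_cast congrArg ((↑) : F → ℂ) hb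
    have hre := congrArg Complex.re h
    simp only [sq, Complex.mul_re, hF b b.2, mul_zero, sub_zero, Complex.neg_re,
      Complex.one_re] at hre
    nlinarith [mul_self_nonneg (b : ℂ).re]
  have hmonic := monic_X_pow_sub_C (-1 : F) two_ne_zero
  have hroot : aeval Complex.I (X ^ 2 - C (-1 : F)) = 0 := by simp
  rw [adjoin.finrank ⟨_, hmonic, hroot⟩, ← minpoly.eq_of_irreducible_of_monic
    (X_pow_sub_C_irreducible_of_prime Nat.prime_two hsq) hroot hmonic, natDegree_X_pow_sub_C]

theorem im_eq_zero_of_mem_adjoin_theta {m : ℕ} {x : ℂ} (hx : x ∈ ℚ⟮theta m⟯) : x.im = 0 := by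
  have hle : ℚ⟮theta m⟯ ≤ Complex.ofRealHom.toRatAlgHom.fieldRange :=
    adjoin_simple_le_iff.mpr ⟨_, rfl⟩
  obtain ⟨r, rfl⟩ := hle hx
  exact Complex.ofReal_im r

theorem Kfield_eq_restrictScalars (m : ℕ) :
    Kfield m = (ℚ⟮theta m⟯⟮Complex.I⟯).restrictScalars ℚ := by
  rw [Kfield, ← Set.union_singleton]
  exact (adjoin_adjoin_left ℚ {theta m} {Complex.I}).symm

theorem stmt_8_general (m : ℕ) (hm : Squarefree m)
    (h23 : m % 4 = 2 ∨ m % 4 = 3) :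
    Module.finrank ℚ (Kfield m) = 8 := by
  rw [Kfield_eq_restrictScalars]
  change Module.finrank ℚ ℚ⟮theta m⟯⟮Complex.I⟯ = 8
  rw [← Module.finrank_mul_finrank ℚ ℚ⟮theta m⟯, finrank_adjoin_theta hm (by omega),
    finrank_adjoin_I_of_forall_im_eq_zero _ fun _ => im_eq_zero_of_mem_adjoin_theta]

/-- For squarefree `m ≡ 2, 3 (mod 4)`, the field `ℚ(i, m^(1/4))` has degree 8 over `ℚ`. -/
theorem stmt_8 (m : ℕ) (hm : Squarefree m) (hpos : 0 < m)
    (h23 : m % 4 = 2 ∨ m % 4 = 3) :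
    Module.finrank ℚ (Kfield m) = 8 :=
  stmt_8_general m hm h23
end

section
/- Let m be a square-free positive integer with m ≡ 2 (mod 4) and let θ = m^(1/4) be the real positive fourth root of m. Then the element (1+i)θ³/2 of ℚ(i, θ) is an algebraic integer. -/
lemma theta_pow4 (m : ℕ) : (theta m) ^ 4 = (m : ℂ) := by
  unfold theta
  rw [← Complex.ofReal_pow]
  norm_cast
  rw [← Real.rpow_natCast ((m:ℝ) ^ ((1:ℝ)/4)) 4, ← Real.rpow_mul (by positivity)]
  norm_num

lemma one_add_I_pow4 : (1 + Complex.I) ^ 4 = -4 := by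
  have h2 : (1 + Complex.I) ^ 2 = 2 * Complex.I := by
    have := Complex.I_sq
    ring_nf
    rw [Complex.I_sq]
    ring
  calc (1 + Complex.I) ^ 4 = ((1 + Complex.I) ^ 2) ^ 2 := by ring
    _ = (2 * Complex.I) ^ 2 := by rw [h2]
    _ = 4 * Complex.I ^ 2 := by ring
    _ = -4 := by rw [Complex.I_sq]; ring

/-- For squarefree `m ≡ 2 (mod 4)`, the element `(1+i)θ³/2` is an algebraic integer. -/
theorem stmt_11 (m : ℕ) (hm : Squarefree m) (hpos : 0 < m) (h2 : m % 4 = 2) :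
    IsIntegral ℤ ((1 + Complex.I) * (theta m) ^ 3 / 2) := by
  obtain ⟨k, hk⟩ : ∃ k, m = 2 * k := ⟨m / 2, by omega⟩
  have hθ : (theta m) ^ 12 = (m : ℂ) ^ 3 := by
    rw [show (theta m) ^ 12 = ((theta m) ^ 4) ^ 3 by ring, theta_pow4]
  have key : ((1 + Complex.I) * (theta m) ^ 3 / 2) ^ 4 = -(2 * (k : ℂ) ^ 3) := by
    calc ((1 + Complex.I) * (theta m) ^ 3 / 2) ^ 4
        = (1 + Complex.I) ^ 4 * (theta m) ^ 12 / 16 := by ring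
      _ = -4 * (m : ℂ) ^ 3 / 16 := by rw [one_add_I_pow4, hθ]
      _ = -(2 * (k : ℂ) ^ 3) := by rw [hk]; push_cast; ring
  refine ⟨Polynomial.X ^ 4 + Polynomial.C (2 * (k : ℤ) ^ 3), ?_, ?_⟩
  · exact Polynomial.monic_X_pow_add_C _ (by norm_num)
  · rw [Polynomial.eval₂_add, Polynomial.eval₂_X_pow, Polynomial.eval₂_C, key]
    push_cast [map_ofNat]
    ring
end
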